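/- arXiv:1801.04682 — 3 statements merged into one kernel-verified Lean document; each statement's English description precedes it below -/
import Mathlib

section
/- Every monomial a^A c^C / b^B with nonnegative integer exponents satisfying 2A + 4C = 3B can be written as a product of nonnegative integer powers of j₂ = ac/b² times either a nonnegative power of j₁ = a³/b² or a nonnegative power of j₃ = c³/b⁴. Consequently j₁, j₂, j₃ generate the ring of absolute Picard curve invariants. -/
/-- Every monomial a^A c^C / b^B with 2A + 4C = 3B is a nonnegative power of
j₂ = ac/b² times a nonnegative power of j₁ = a³/b² or of j₃ = c³/b⁴. -/
theorem picard_monomial_decomposition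
    (F : Type*) [Field F] (a b c : F) (hb : b ≠ 0)
    (A B C : ℕ) (h : 2 * A + 4 * C = 3 * B) :
    ∃ k m : ℕ,
      a ^ A * c ^ C / b ^ B = (a * c / b ^ 2) ^ k * (a ^ 3 / b ^ 2) ^ m ∨
      a ^ A * c ^ C / b ^ B = (a * c / b ^ 2) ^ k * (c ^ 3 / b ^ 4) ^ m := by
  rcases le_or_gt C A with hCA | hCA
  · obtain ⟨m, hm⟩ : 3 ∣ A - C := by omega
    have hA : A = C + 3 * m := by omega
    have hB : B = 2 * C + 2 * m := by omega
    refine ⟨C, m, Or.inl ?_⟩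
    subst hA hB
    rw [div_pow, div_pow, ← pow_mul, ← pow_mul, ← pow_mul, div_mul_div_comm, ← pow_add]
    ring
  · obtain ⟨m, hm⟩ : 3 ∣ C - A := by omega
    have hC : C = A + 3 * m := by omega
    have hB : B = 2 * A + 4 * m := by omega
    refine ⟨A, m, Or.inr ?_⟩
    subst hC hB
    rw [div_pow, div_pow, ← pow_mul, ← pow_mul, ← pow_mul, div_mul_div_comm, ← pow_add]
    ring
end

section
/- Let K₊ be a totally real cubic number field with ring of integers O₊, and embed K₊ in ℝ³ via its three real embeddings. For any ε > 0 there exists a nonzero μ in the order ℤ + 2O₊ such that all three real embeddings σᵢ(μ) satisfy |σ₁(μ)| < 1 and σ₂(μ)² + σ₃(μ)² < R² where R = 4π^{-1/2}|Δ(O₊)|^{1/4} + ε. Any such μ generates K₊ over ℚ and satisfies tr_{K₊/ℚ}(μ²) ≤ 1 + R². -/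
section AuxA
open NumberField


lemma aux_adapted_basis (K : Type) [Field K] [NumberField K] :
    ∃ (ι₂ : Type) (_ : Fintype ι₂) (b : Module.Basis (Unit ⊕ ι₂) ℤ (𝓞 K)),
      b (Sum.inl ()) = 1 := by
  classical
  set O := 𝓞 K
  set N : Submodule ℤ O := Submodule.span ℤ {(1 : O)} with hN
  -- key saturation property
  have hsat : ∀ (c : ℤ) (y : O), c ≠ 0 → c • y ∈ N → y ∈ N := by
    intro c y hc hcy
    rw [hN, Submodule.mem_span_singleton] at hcy
    obtain ⟨m, hm⟩ := hcy
    -- in K : (m : K) = c • y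
    have hK : (m : K) = (c : K) * (algebraMap O K y) := by
      have := congrArg (algebraMap O K) hm
      push_cast [zsmul_eq_mul] at this ⊢
      simpa using this
    have hq : algebraMap O K y = algebraMap ℚ K ((m : ℚ) / (c : ℚ)) := by
      have hc' : (c : K) ≠ 0 := by exact_mod_cast hc
      have h2 : algebraMap ℚ K ((m : ℚ) / (c : ℚ)) = (m : K) / (c : K) := by
        push_cast; norm_cast
      rw [h2, hK, mul_comm, mul_div_assoc, div_self hc', mul_one]
    have hint : IsIntegral ℤ ((m : ℚ) / (c : ℚ)) := by
      rw [← isIntegral_algebraMap_iff (algebraMap ℚ K).injective, ← hq]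
      exact y.2
    obtain ⟨z, hz⟩ := IsIntegrallyClosed.isIntegral_iff.mp hint
    have : y = z • (1 : O) := by
      apply RingOfIntegers.coe_injective
      rw [hq, ← hz]
      push_cast [zsmul_eq_mul]
      simp
    rw [hN, Submodule.mem_span_singleton]
    exact ⟨z, this.symm⟩
  haveI : NoZeroSMulDivisors ℤ (O ⧸ N) := by
    constructor
    intro c x h
    by_cases hc : c = 0
    · exact Or.inl hc
    · right
      obtain ⟨y, rfl⟩ := Submodule.Quotient.mk_surjective N x
      rw [← Submodule.Quotient.mk_smul, Submodule.Quotient.mk_eq_zero] at h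
      rw [Submodule.Quotient.mk_eq_zero]
      exact hsat c y hc h
  let bQ := Module.Free.chooseBasis ℤ (O ⧸ N)
  set ι₂ := Module.Free.ChooseBasisIndex ℤ (O ⧸ N)
  obtain ⟨s, hs⟩ := Module.projective_lifting_property N.mkQ (LinearMap.id) (Submodule.mkQ_surjective N)
  set v : Unit ⊕ ι₂ → O := Sum.elim (fun _ => (1 : O)) (fun i => s (bQ i)) with hv
  have hmkQ1 : N.mkQ (1 : O) = 0 := by
    rw [Submodule.mkQ_apply, Submodule.Quotient.mk_eq_zero]
    exact Submodule.mem_span_singleton_self _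
  have hsec : ∀ q : O ⧸ N, N.mkQ (s q) = q := fun q => congrArg (· q) (congrArg DFunLike.coe hs)
  have hli : LinearIndependent ℤ v := by
    rw [Fintype.linearIndependent_iff]
    intro g hg
    have h2 : N.mkQ (∑ i, g i • v i) = 0 := by rw [hg, map_zero]
    rw [map_sum] at h2
    simp only [map_smul] at h2
    rw [Fintype.sum_sum_type] at h2
    simp only [hv, Sum.elim_inl, Sum.elim_inr, hmkQ1, smul_zero, Finset.sum_const, hsec] at h2
    have h3 : ∀ i : ι₂, g (Sum.inr i) = 0 := by
      have := Fintype.linearIndependent_iff.mp bQ.linearIndependent (fun i => g (Sum.inr i)) (by simpa using h2)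
      exact this
    intro i
    cases i with
    | inr i => exact h3 i
    | inl u =>
      have : g (Sum.inl ()) • (1 : O) = 0 := by
        rw [Fintype.sum_sum_type] at hg
        simp only [hv, Sum.elim_inl, Sum.elim_inr] at hg
        simp only [h3, zero_smul, Finset.sum_const_zero, add_zero] at hg
        simpa using hg
      have h1 : g (Sum.inl ()) • (1 : O) = 0 → g (Sum.inl ()) = 0 := by
        intro h
        rcases smul_eq_zero.mp h with h | h
        · exact h
        · exact absurd h one_ne_zero
      cases u; exact h1 this
  have hsp : ⊤ ≤ Submodule.span ℤ (Set.range v) := by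
    intro x _
    have hx : x - s (N.mkQ x) ∈ N := by
      rw [← Submodule.Quotient.mk_eq_zero, ← Submodule.mkQ_apply, map_sub, hsec, sub_self]
    have h1 : x - s (N.mkQ x) ∈ Submodule.span ℤ (Set.range v) := by
      have hx' : x - s (N.mkQ x) ∈ Submodule.span ℤ {(1 : O)} := hx
      rw [Submodule.mem_span_singleton] at hx'
      obtain ⟨m, hm⟩ := hx'
      have h0 : m • (1 : O) ∈ Submodule.span ℤ (Set.range v) :=
        Submodule.smul_mem _ m (Submodule.subset_span ⟨Sum.inl (), rfl⟩)
      rwa [hm] at h0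
    have h2 : s (N.mkQ x) ∈ Submodule.span ℤ (Set.range v) := by
      have : N.mkQ x ∈ Submodule.span ℤ (Set.range bQ) := by
        rw [bQ.span_eq]; trivial
      refine Submodule.span_induction ?_ ?_ ?_ ?_ this
      · rintro q ⟨i, rfl⟩
        exact Submodule.subset_span ⟨Sum.inr i, rfl⟩
      · simpa using Submodule.zero_mem _
      · intro a b _ _ ha hb
        rw [map_add]; exact Submodule.add_mem _ ha hb
      · intro c a _ ha
        rw [map_smul]; exact Submodule.smul_mem _ _ ha
    have := Submodule.add_mem _ h1 h2
    simpa using this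
  exact ⟨ι₂, inferInstance, Module.Basis.mk hli hsp, by simp [Module.Basis.mk_apply, hv]⟩

end AuxA

section AuxB
open MeasureTheory


lemma aux_volume_cylinder (R : ℝ) (hR : 0 < R) :
    volume {x : Fin 3 → ℝ | |x 0| < 1 ∧ (x 1) ^ 2 + (x 2) ^ 2 < R ^ 2}
      = ENNReal.ofReal 2 * (ENNReal.ofReal R ^ 2 * NNReal.pi) := by
  classical
  set e2 : (Fin 2 → ℝ) ≃ᵐ ℂ :=
    MeasurableEquiv.finTwoArrow.trans Complex.measurableEquivRealProd.symm with he2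
  set T : (Fin 3 → ℝ) ≃ᵐ ℝ × ℂ :=
    (MeasurableEquiv.piFinSuccAbove (fun _ : Fin 3 => ℝ) 0).trans
      ((MeasurableEquiv.refl ℝ).prodCongr e2) with hTdef
  have h23 : MeasurePreserving e2 volume volume :=
    (Complex.volume_preserving_equiv_real_prod.symm Complex.measurableEquivRealProd).comp
      (MeasureTheory.volume_preserving_finTwoArrow ℝ)
  have hT : MeasurePreserving T volume volume :=
    (((MeasurePreserving.id volume).prod h23).comp
      (MeasureTheory.volume_preserving_piFinSuccAbove (fun _ : Fin 3 => ℝ) 0))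
  have hset : {x : Fin 3 → ℝ | |x 0| < 1 ∧ (x 1) ^ 2 + (x 2) ^ 2 < R ^ 2}
      = T ⁻¹' (Set.Ioo (-1 : ℝ) 1 ×ˢ Metric.ball (0 : ℂ) R) := by
    ext x
    have hTx : T x = (x 0, ⟨x 1, x 2⟩) := rfl
    simp only [Set.mem_setOf_eq, Set.mem_preimage, hTx, Set.mem_prod, Set.mem_Ioo,
      Metric.mem_ball, dist_zero_right]
    rw [abs_lt, Complex.norm_def, Complex.normSq_mk,
      show Real.sqrt ((x 1) * (x 1) + (x 2) * (x 2)) < R ↔ _ from Real.sqrt_lt' hR]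
    constructor
    · rintro ⟨ha, hb⟩; exact ⟨ha, by nlinarith⟩
    · rintro ⟨ha, hb⟩; exact ⟨ha, by nlinarith⟩
  rw [hset, hT.measure_preimage ((measurableSet_Ioo.prod measurableSet_ball).nullMeasurableSet)]
  rw [show (volume : Measure (ℝ × ℂ)) = (volume : Measure ℝ).prod (volume : Measure ℂ) from rfl]
  rw [Measure.prod_prod, Real.volume_Ioo, Complex.volume_ball]
  norm_num

end AuxB

section Main
open NumberField MeasureTheory Submodule
open scoped ENNReal NNReal
open IntermediateField

set_option maxHeartbeats 1000000 in
/-- Existence of a small generator μ ∈ ℤ + 2O₊ of a totally real cubic field K₊,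
with bounded real embeddings and bounded trace of μ². -/
theorem exists_small_generator_totally_real_cubic
    (K : Type) [Field K] [NumberField K]
    (hdeg : Module.finrank ℚ K = 3)
    (σ : Fin 3 → (K →+* ℝ)) (hσ : Function.Injective σ)
    (ε : ℝ) (hε : 0 < ε) :
    ∃ μ : K,
      (∃ (z : ℤ) (x : K), IsIntegral ℤ x ∧ μ = (z : K) + 2 * x) ∧
      μ ≠ 0 ∧
      |σ 0 μ| < 1 ∧
      (σ 1 μ) ^ 2 + (σ 2 μ) ^ 2
        < (4 * Real.pi ^ (-(1 : ℝ) / 2) * |(NumberField.discr K : ℝ)| ^ ((1 : ℝ) / 4) + ε) ^ 2 ∧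
      Algebra.adjoin ℚ {μ} = ⊤ ∧
      (Algebra.trace ℚ K (μ ^ 2) : ℝ)
        ≤ 1 + (4 * Real.pi ^ (-(1 : ℝ) / 2) * |(NumberField.discr K : ℝ)| ^ ((1 : ℝ) / 4) + ε) ^ 2 := by
  classical
  set Δ : ℝ := |(NumberField.discr K : ℝ)| with hΔdef
  set B : ℝ := 4 * Real.pi ^ (-(1 : ℝ) / 2) * Δ ^ ((1 : ℝ) / 4) with hBdef
  set R : ℝ := B + ε with hRdef
  have hΔpos : (0 : ℝ) < Δ := by
    rw [hΔdef, abs_pos]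
    exact_mod_cast NumberField.discr_ne_zero K
  have hπ : (0 : ℝ) < Real.pi := Real.pi_pos
  have hB : 0 ≤ B := by positivity
  have hR : 0 < R := by positivity
  -- adapted integral basis
  obtain ⟨ι₂, _, bO, hbO1⟩ := aux_adapted_basis K
  have hcard : Fintype.card (Unit ⊕ ι₂) = 3 := by
    rw [← Module.finrank_eq_card_basis bO, RingOfIntegers.rank, hdeg]
  have hcard2 : Fintype.card ι₂ = 2 := by
    have := hcard
    rw [Fintype.card_sum] at this
    simp only [Fintype.card_unit] at this
    omega
  set e3 : (Unit ⊕ ι₂) ≃ Fin 3 := Fintype.equivFinOfCardEq hcard with he3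
  set bK : Fin 3 → K := fun j => algebraMap (𝓞 K) K (bO (e3.symm j)) with hbK
  set v : Fin 3 → K := fun j =>
    Sum.elim (fun _ => (1 : K)) (fun i => 2 * algebraMap (𝓞 K) K (bO (Sum.inr i)))
      (e3.symm j) with hv
  -- the embeddings as ℚ-algebra maps to ℂ
  set τ : Fin 3 → (K →ₐ[ℚ] ℂ) := fun i =>
    RingHom.toRatAlgHom (Complex.ofRealHom.comp (σ i)) with hτ
  have hτval : ∀ i x, τ i x = ((σ i x : ℝ) : ℂ) := fun i x => rfl
  have hτinj : Function.Injective τ := by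
    intro i j h
    apply hσ
    ext x
    have := congrArg (fun f => (f : K →ₐ[ℚ] ℂ) x) h
    simpa [hτval, Complex.ofReal_inj] using this
  have hτbij : Function.Bijective τ := by
    rw [Fintype.bijective_iff_injective_and_card]
    exact ⟨hτinj, by rw [AlgHom.card ℚ K ℂ, hdeg, Fintype.card_fin]⟩
  set eτ : Fin 3 ≃ (K →ₐ[ℚ] ℂ) := Equiv.ofBijective τ hτbij with heτ
  -- the real matrix of the embeddings of the basis
  set M : Matrix (Fin 3) (Fin 3) ℝ := Matrix.of fun i j => σ j (bK i) with hM
  -- discriminant equality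
  have hdisc : (NumberField.discr K : ℝ) = M.det ^ 2 := by
    have h1 : Algebra.discr ℚ bK = (NumberField.discr K : ℚ) := by
      have hfam : bK = ⇑(Module.Basis.localizationLocalization ℚ (nonZeroDivisors ℤ) K bO) ∘ e3.symm := by
        funext j
        simp [hbK, Module.Basis.localizationLocalization_apply]
      rw [hfam, Algebra.discr_reindex,
        Algebra.discr_localizationLocalization ℤ (nonZeroDivisors ℤ) K bO,
        NumberField.discr_eq_discr K bO, eq_intCast]
    have h5 := Algebra.discr_eq_det_embeddingsMatrixReindex_pow_two ℚ ℂ bK eτ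
    have h6 : Algebra.embeddingsMatrixReindex ℚ ℂ bK eτ = M.map Complex.ofReal := by
      ext i j
      simp [Algebra.embeddingsMatrixReindex, Algebra.embeddingsMatrix, heτ,
        Equiv.ofBijective_apply, hτval, hM, Matrix.reindex_apply]
    rw [h1, h6] at h5
    have h7 : ((NumberField.discr K : ℝ) : ℂ) = ((M.det ^ 2 : ℝ) : ℂ) := by
      rw [show ((NumberField.discr K : ℝ) : ℂ) = algebraMap ℚ ℂ (NumberField.discr K : ℚ) by
        push_cast; simp, h5]
      have h8 : (M.map Complex.ofReal).det = ((M.det : ℝ) : ℂ) := by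
        rw [show M.map Complex.ofReal = Complex.ofRealHom.mapMatrix M from rfl,
          ← RingHom.map_det]
        rfl
      rw [h8]
      push_cast
      ring
    exact_mod_cast h7
  have hdetM : M.det ^ 2 = Δ := by rw [hΔdef, ← hdisc, abs_of_nonneg (hdisc ▸ sq_nonneg M.det)]
  have hdetM0 : M.det ≠ 0 := by
    intro h
    rw [h] at hdetM
    simp at hdetM
    exact absurd hdetM.symm (ne_of_gt hΔpos)
  -- the scaled matrix
  set d : Fin 3 → ℝ := fun j => Sum.elim (fun _ => (1 : ℝ)) (fun _ => 2) (e3.symm j) with hd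
  set A : Matrix (Fin 3) (Fin 3) ℝ := Matrix.of fun i j => σ j (v i) with hA
  have hAeq : A = Matrix.diagonal d * M := by
    ext i j
    rw [Matrix.diagonal_mul]
    show σ j (v i) = d i * σ j (bK i)
    rcases h : e3.symm i with u | k
    · simp [hv, hbK, hd, h, hbO1]
    · simp [hv, hbK, hd, h, map_mul, map_ofNat]
  have hproded : ∏ j, d j = 4 := by
    have h1 : ∏ j, d j = ∏ k : Unit ⊕ ι₂, Sum.elim (fun _ => (1:ℝ)) (fun _ => 2) k := by
      rw [hd, ← Equiv.prod_comp e3.symm (Sum.elim (fun _ => (1:ℝ)) (fun _ => 2))]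
    rw [h1, Fintype.prod_sum_type]
    simp [hcard2]
    norm_num
  have hdetA : A.det = 4 * M.det := by
    rw [hAeq, Matrix.det_mul, Matrix.det_diagonal, hproded]
  have hdetA0 : IsUnit A.det := by
    rw [hdetA]
    exact (mul_ne_zero (by norm_num) hdetM0).isUnit
  -- basis of ℝ³
  have hli : LinearIndependent ℝ (fun i => A i) :=
    Matrix.linearIndependent_rows_iff_isUnit.mpr ((Matrix.isUnit_iff_isUnit_det A).mpr hdetA0)
  have hcard3 : Fintype.card (Fin 3) = Module.finrank ℝ (Fin 3 → ℝ) := by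
    simp
  set cB : Module.Basis (Fin 3) ℝ (Fin 3 → ℝ) := basisOfLinearIndependentOfCardEqFinrank hli hcard3
    with hcB
  have hcBc : ⇑cB = fun i => A i := coe_basisOfLinearIndependentOfCardEqFinrank hli hcard3
  -- Minkowski
  set S : Set (Fin 3 → ℝ) := {x : Fin 3 → ℝ | |x 0| < 1 ∧ (x 1) ^ 2 + (x 2) ^ 2 < R ^ 2}
    with hS
  have h_fund := ZSpan.isAddFundamentalDomain' cB volume
  have : Countable (span ℤ (Set.range cB)).toAddSubgroup := by
    change Countable (span ℤ (Set.range cB))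
    infer_instance
  have h_symm : ∀ x ∈ S, -x ∈ S := by
    intro x hx
    simp only [hS, Set.mem_setOf_eq, Pi.neg_apply, abs_neg, neg_sq] at hx ⊢
    exact hx
  have h_conv : Convex ℝ S := by
    have h1 : Convex ℝ {x : Fin 3 → ℝ | |x 0| < 1} := by
      have : {x : Fin 3 → ℝ | |x 0| < 1}
          = (LinearMap.proj 0 : (Fin 3 → ℝ) →ₗ[ℝ] ℝ) ⁻¹' (Set.Ioo (-1) 1) := by
        ext x
        simp [abs_lt, Set.mem_Ioo]
      rw [this]
      exact (convex_Ioo (-1 : ℝ) 1).linear_preimage _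
    have h2 : Convex ℝ {x : Fin 3 → ℝ | (x 1) ^ 2 + (x 2) ^ 2 < R ^ 2} := by
      set f : (Fin 3 → ℝ) →ₗ[ℝ] ℂ :=
        { toFun := fun x => ⟨x 1, x 2⟩
          map_add' := by intro x y; apply Complex.ext <;> simp
          map_smul' := by intro c x; apply Complex.ext <;> simp }
      have : {x : Fin 3 → ℝ | (x 1) ^ 2 + (x 2) ^ 2 < R ^ 2}
          = f ⁻¹' (Metric.ball (0 : ℂ) R) := by
        ext x
        simp only [Set.mem_setOf_eq, Set.mem_preimage, Metric.mem_ball, dist_zero_right,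
          Complex.norm_def]
        rw [show Complex.normSq (f x) = (x 1) * (x 1) + (x 2) * (x 2) from rfl,
          Real.sqrt_lt' hR]
        constructor <;> intro h <;> nlinarith
      rw [this]
      exact (convex_ball (0 : ℂ) R).linear_preimage f
    have : S = {x : Fin 3 → ℝ | |x 0| < 1} ∩ {x : Fin 3 → ℝ | (x 1)^2 + (x 2)^2 < R^2} := by
      ext x; simp only [hS, Set.mem_setOf_eq, Set.mem_inter_iff]
    rw [this]
    exact h1.inter h2
  have h_vol : volume (ZSpan.fundamentalDomain cB) * 2 ^ Module.finrank ℝ (Fin 3 → ℝ)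
      < volume S := by
    rw [ZSpan.volume_fundamentalDomain, hS, aux_volume_cylinder R hR]
    have hMof : (Matrix.of ⇑cB) = A := by
      rw [hcBc]
      ext i j
      rfl
    rw [hMof, hdetA]
    have h3 : Module.finrank ℝ (Fin 3 → ℝ) = 3 := by simp
    rw [h3]
    set m : ℝ := |M.det| with hmdef
    have hm0 : 0 < m := abs_pos.mpr hdetM0
    have hBsq : B ^ 2 * Real.pi = 16 * m := by
      have e1 : (Real.pi ^ (-(1:ℝ)/2)) ^ 2 = Real.pi ^ (-(1:ℝ)) := by
        rw [← Real.rpow_natCast (Real.pi ^ (-(1:ℝ)/2)) 2, ← Real.rpow_mul hπ.le]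
        norm_num
      have e2 : (Δ ^ ((1:ℝ)/4)) ^ 2 = m := by
        rw [← Real.rpow_natCast (Δ ^ ((1:ℝ)/4)) 2, ← Real.rpow_mul hΔpos.le]
        norm_num
        rw [← Real.sqrt_eq_rpow, ← hdetM, Real.sqrt_sq_eq_abs]
      rw [hBdef, mul_pow, mul_pow, e1, e2, Real.rpow_neg_one]
      field_simp
      norm_num
    have hBR : B ^ 2 < R ^ 2 := by nlinarith
    have hreal : |4 * M.det| * 8 < 2 * (R ^ 2 * Real.pi) := by
      rw [abs_mul, abs_of_nonneg (by norm_num : (0:ℝ) ≤ 4), ← hmdef]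
      linarith [mul_lt_mul_of_pos_right hBR hπ, hBsq]
    have hRHS : ENNReal.ofReal 2 * (ENNReal.ofReal R ^ 2 * (NNReal.pi : ℝ≥0∞))
        = ENNReal.ofReal (2 * (R ^ 2 * Real.pi)) := by
      rw [← ENNReal.ofReal_pow hR.le, ← ENNReal.ofReal_coe_nnreal, NNReal.coe_real_pi,
        ← ENNReal.ofReal_mul (by positivity), ← ENNReal.ofReal_mul (by norm_num)]
    have hLHS : ENNReal.ofReal |4 * M.det| * (2:ℝ≥0∞) ^ (3:ℕ)
        = ENNReal.ofReal (|4 * M.det| * 8) := by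
      rw [ENNReal.ofReal_mul (abs_nonneg _)]
      norm_num
    rw [hRHS, hLHS]
    exact ENNReal.ofReal_lt_ofReal_iff (by positivity) |>.mpr hreal
  obtain ⟨⟨x, hx⟩, h_nz, h_mem⟩ := exists_ne_zero_mem_lattice_of_measure_mul_two_pow_lt_measure
    h_fund h_symm h_conv h_vol
  -- extract μ
  set φ : K →+* (Fin 3 → ℝ) := Pi.ringHom σ with hφ
  set φₗ : K →ₗ[ℤ] (Fin 3 → ℝ) := φ.toAddMonoidHom.toIntLinearMap with hφₗ
  have hxspan : x ∈ span ℤ (Set.range ⇑cB) := hx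
  have hrange : Set.range ⇑cB = ⇑φₗ '' (Set.range v) := by
    rw [hcBc, ← Set.range_comp]
    rfl
  rw [hrange, Submodule.span_image] at hxspan
  obtain ⟨μ, hμspan, hφμ⟩ := hxspan
  have hxi : ∀ i, x i = σ i μ := by
    intro i
    rw [← hφμ]
    rfl
  have hx0 : x ≠ 0 := fun h => h_nz (Subtype.ext h)
  have hμ0 : μ ≠ 0 := by
    intro h
    apply hx0
    rw [← hφμ, h, map_zero]
  -- shape of μ
  have hform : ∃ (z : ℤ) (y : K), IsIntegral ℤ y ∧ μ = (z : K) + 2 * y := by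
    refine Submodule.span_induction ?_ ?_ ?_ ?_ hμspan
    · rintro _ ⟨j, rfl⟩
      rcases h : e3.symm j with u | k
      · exact ⟨1, 0, isIntegral_zero, by simp [hv, h]⟩
      · exact ⟨0, algebraMap (𝓞 K) K (bO (Sum.inr k)), (bO (Sum.inr k)).2, by simp [hv, h]⟩
    · exact ⟨0, 0, isIntegral_zero, by simp⟩
    · rintro a b _ _ ⟨z1, y1, hy1, rfl⟩ ⟨z2, y2, hy2, rfl⟩
      exact ⟨z1 + z2, y1 + y2, hy1.add hy2, by push_cast; ring⟩
    · rintro c a _ ⟨z1, y1, hy1, rfl⟩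
      have hc : IsIntegral ℤ ((c : ℤ) : K) := by
        have h9 : ((c : K)) = algebraMap ℤ K c := by simp
        rw [h9]
        exact isIntegral_algebraMap
      exact ⟨c * z1, (c : K) * y1, hc.mul hy1, by push_cast [zsmul_eq_mul]; ring⟩
  have hmem1 : |σ 0 μ| < 1 := by rw [← hxi 0]; exact h_mem.1
  have hmem2 : (σ 1 μ) ^ 2 + (σ 2 μ) ^ 2 < R ^ 2 := by rw [← hxi 1, ← hxi 2]; exact h_mem.2
  obtain ⟨z, y, hy, hzy⟩ := hform
  have hμint : IsIntegral ℤ μ := by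
    rw [hzy]
    have h1 : IsIntegral ℤ ((z : K)) := by
      have h9 : ((z : K)) = algebraMap ℤ K z := by simp
      rw [h9]; exact isIntegral_algebraMap
    have h2 : IsIntegral ℤ ((2 : K)) := by
      have h9 : ((2 : K)) = algebraMap ℤ K 2 := by simp
      rw [h9]; exact isIntegral_algebraMap
    exact h1.add (h2.mul hy)
  have hrat : ∀ q : ℚ, μ ≠ algebraMap ℚ K q := by
    intro q hq
    have hqint : IsIntegral ℤ q := by
      rw [← isIntegral_algebraMap_iff (algebraMap ℚ K).injective, ← hq]
      exact hμint
    obtain ⟨z', hz'⟩ := IsIntegrallyClosed.isIntegral_iff.mp hqint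
    have hσ0 : σ 0 μ = (z' : ℝ) := by
      rw [hq, ← hz']
      have h9 : algebraMap ℚ K (algebraMap ℤ ℚ z') = ((z' : ℤ) : K) := by
        push_cast; simp
      rw [h9]
      simp [map_intCast]
    rw [hσ0] at hmem1
    have hz0 : z' = 0 := by
      have h9 : |(z' : ℝ)| < 1 := hmem1
      rw [← Int.cast_abs] at h9
      have h10 : |z'| < 1 := by exact_mod_cast h9
      exact Int.abs_lt_one_iff.mp h10
    apply hμ0
    rw [hq, ← hz', hz0]
    simp
  have hμintQ : IsIntegral ℚ μ := hμint.tower_top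
  have hgen : Algebra.adjoin ℚ {μ} = ⊤ := by
    set F : IntermediateField ℚ K := ℚ⟮μ⟯ with hF
    have hFalg : F.toSubalgebra = Algebra.adjoin ℚ {μ} :=
      IntermediateField.adjoin_simple_toSubalgebra_of_isAlgebraic hμintQ.isAlgebraic
    have hmul : Module.finrank ℚ F * Module.finrank F K = 3 := by
      rw [Module.finrank_mul_finrank ℚ F K]
      exact hdeg
    have hdvd : Module.finrank ℚ F ∣ 3 := ⟨_, hmul.symm⟩
    rcases (Nat.prime_three).eq_one_or_self_of_dvd _ hdvd with h1 | h3
    · exfalso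
      have hbot : F = ⊥ := IntermediateField.finrank_eq_one_iff.mp h1
      have hμF : μ ∈ F := IntermediateField.mem_adjoin_simple_self ℚ μ
      rw [hbot, IntermediateField.mem_bot] at hμF
      obtain ⟨q, hq⟩ := hμF
      exact hrat q hq.symm
    · rw [← hFalg, ← Algebra.toSubmodule_eq_top]
      apply Submodule.eq_top_of_finrank_eq
      rw [show Module.finrank ℚ (Subalgebra.toSubmodule F.toSubalgebra) = Module.finrank ℚ F
        from rfl, h3, hdeg]
  have htr : ((Algebra.trace ℚ K (μ ^ 2) : ℚ) : ℝ) = ∑ i : Fin 3, (σ i μ) ^ 2 := by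
    have h1 := trace_eq_sum_embeddings (E := ℂ) (K := ℚ) (L := K) (x := μ ^ 2)
    have h2 : ∑ τ' : K →ₐ[ℚ] ℂ, τ' (μ ^ 2) = ∑ i : Fin 3, (((σ i μ : ℝ) : ℂ)) ^ 2 := by
      rw [← Equiv.sum_comp eτ]
      refine Finset.sum_congr rfl fun i _ => ?_
      rw [show eτ i = τ i from rfl, map_pow, hτval]
    have h3 : ((((Algebra.trace ℚ K (μ ^ 2) : ℚ) : ℝ)) : ℂ)
        = ((∑ i : Fin 3, (σ i μ) ^ 2 : ℝ) : ℂ) := by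
      rw [show ((((Algebra.trace ℚ K (μ ^ 2) : ℚ) : ℝ)) : ℂ)
          = algebraMap ℚ ℂ (Algebra.trace ℚ K (μ ^ 2)) by push_cast; simp]
      rw [h1, h2]
      push_cast
      rfl
    exact_mod_cast h3
  have hsq0 : (σ 0 μ) ^ 2 < 1 := by
    rcases abs_lt.mp hmem1 with ⟨ha, hb⟩
    nlinarith
  refine ⟨μ, ⟨z, y, hy, hzy⟩, hμ0, hmem1, hmem2, hgen, ?_⟩
  rw [htr, Fin.sum_univ_three]
  linarith

end Main
end

section
/- Let O₊ be an order in a totally real cubic field with |Δ(O₊)| ≥ 2. Then there exists a totally real μ ∈ ℤ + 2O₊ generating the field, with tr(μ²) ≤ 1 + (16/π)|Δ(O₊)|^{1/2}, and consequently tr(μ²)³ ≤ (1 + (16/π)|Δ(O₊)|^{1/2})³ < 196|Δ(O₊)|^{3/2}. -/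
open NumberField NumberField.InfinitePlace NumberField.mixedEmbedding MeasureTheory Module
open scoped ENNReal NNReal Real nonZeroDivisors IntermediateField

-- numeric final inequality
lemma aux_numeric {d : ℝ} (hd : 2 ≤ d) :
    (1 + (16 / Real.pi) * Real.sqrt d) ^ 3 < 196 * d ^ ((3 : ℝ) / 2) := by
  have hπ : (3.141592 : ℝ) < Real.pi := Real.pi_gt_d6
  have hπ0 : (0:ℝ) < Real.pi := by linarith
  have hs2 : (1.414213 : ℝ) ≤ Real.sqrt d := by
    have h1 : Real.sqrt 2 ≤ Real.sqrt d := Real.sqrt_le_sqrt hd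
    have h2 : (1.414213 : ℝ) ≤ Real.sqrt 2 := by
      nlinarith [Real.sq_sqrt (by norm_num : (0:ℝ) ≤ 2), Real.sqrt_nonneg 2]
    linarith
  set s := Real.sqrt d with hs
  have hs0 : 0 < s := by linarith
  have hd32 : d ^ ((3 : ℝ) / 2) = s ^ 3 := by
    have hd0 : (0:ℝ) ≤ d := by linarith
    rw [hs, show ((3:ℝ)/2) = (1/2) * 3 by norm_num, Real.rpow_mul hd0,
      ← Real.sqrt_eq_rpow, show ((3:ℝ)) = ((3:ℕ):ℝ) from by norm_num, Real.rpow_natCast]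
  rw [hd32]
  -- 1 + (16/π) s ≤ s * (1/1.414213 + 16/π) and cube
  have h16 : 16 / Real.pi < 5.09297 := by
    rw [div_lt_iff₀ hπ0]; nlinarith
  have h160 : 0 < 16 / Real.pi := by positivity
  have key : 1 + (16 / Real.pi) * s < 5.80008 * s := by
    have h1 : (1:ℝ) ≤ s / 1.414213 := by
      rw [le_div_iff₀ (by norm_num)]; linarith
    have : 1 + (16 / Real.pi) * s ≤ s / 1.414213 + (16 / Real.pi) * s := by linarith
    have h2 : s / 1.414213 + (16 / Real.pi) * s < 5.80008 * s := by
      have : s / 1.414213 = (1/1.414213) * s := by ring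
      rw [this]
      have h3 : (1/1.414213 : ℝ) + 16 / Real.pi < 5.80008 := by
        have : (1/1.414213 : ℝ) < 0.70711 := by norm_num
        linarith
      nlinarith
    linarith
  have hL0 : (0:ℝ) ≤ 1 + (16 / Real.pi) * s := by positivity
  calc (1 + (16 / Real.pi) * s) ^ 3 < (5.80008 * s) ^ 3 := by
        exact pow_lt_pow_left₀ key hL0 (by norm_num)
    _ = (5.80008:ℝ)^3 * s^3 := by ring
    _ < 196 * s ^ 3 := by nlinarith [pow_pos hs0 3]

-- volume of the slab/disc body
lemma aux_volume {ι : Type} [Fintype ι] (hcard : Fintype.card ι = 3) (A c : ℝ)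
    (hA : 0 ≤ A) (hc : 0 ≤ c) :
    volume {x : ι → ℝ | |∑ w, x w| ≤ Real.sqrt 3 * A ∧
        ∑ w, (x w) ^ 2 ≤ (∑ w, x w) ^ 2 / 3 + c}
      = ENNReal.ofReal (2 * A) * ENNReal.ofReal (c * Real.pi) := by
  classical
  have h3 : (0:ℝ) < Real.sqrt 3 := Real.sqrt_pos.mpr (by norm_num)
  have hsq3 : Real.sqrt 3 ^ 2 = 3 := Real.sq_sqrt (by norm_num)
  -- an orthonormal basis of `EuclideanSpace ℝ ι` whose first vector is constant
  let u : EuclideanSpace ℝ ι := WithLp.toLp 2 (fun _ => (Real.sqrt 3)⁻¹)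
  have hu_norm : ‖u‖ = 1 := by
    rw [EuclideanSpace.norm_eq]
    have : ∀ w : ι, ‖u w‖ ^ 2 = 3⁻¹ := by
      intro w
      show ‖(Real.sqrt 3)⁻¹‖ ^ 2 = 3⁻¹
      rw [Real.norm_eq_abs, sq_abs, inv_pow, hsq3]
    rw [Finset.sum_congr rfl (fun w _ => this w), Finset.sum_const, Finset.card_univ, hcard]
    rw [nsmul_eq_mul]
    norm_num
  have horth : Orthonormal ℝ
      (Set.restrict ({0} : Set (Fin 3)) (fun _ => u)) := by
    constructor
    · intro i
      exact hu_norm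
    · intro i j hij
      exact absurd (Subtype.ext ((Set.mem_singleton_iff.mp i.2).trans
        (Set.mem_singleton_iff.mp j.2).symm)) hij
  obtain ⟨b, hb⟩ := horth.exists_orthonormalBasis_extension_of_card_eq
    (by rw [finrank_euclideanSpace, hcard, Fintype.card_fin])
  have hb0 : b 0 = u := hb 0 rfl
  -- the measurable equivalence
  let e1 : (ι → ℝ) ≃ᵐ EuclideanSpace ℝ ι := (MeasurableEquiv.toLp 2 (ι → ℝ)).symm.symm
  let e2 : EuclideanSpace ℝ ι ≃ᵐ EuclideanSpace ℝ (Fin 3) := b.measurableEquiv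
  let e3 : EuclideanSpace ℝ (Fin 3) ≃ᵐ (Fin 3 → ℝ) := (MeasurableEquiv.toLp 2 (Fin 3 → ℝ)).symm
  let e4 : (Fin 3 → ℝ) ≃ᵐ ℝ × (Fin 2 → ℝ) :=
    MeasurableEquiv.piFinSuccAbove (fun _ : Fin 3 => ℝ) 0
  let Ψ : (ι → ℝ) ≃ᵐ ℝ × (Fin 2 → ℝ) := ((e1.trans e2).trans e3).trans e4
  have hΨ : MeasurePreserving Ψ volume volume := by
    have m1 : MeasurePreserving e1 volume volume :=
      (EuclideanSpace.volume_preserving_symm_measurableEquiv_toLp ι).symm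
    have m2 : MeasurePreserving e2 volume volume := b.measurePreserving_measurableEquiv
    have m3 : MeasurePreserving e3 volume volume :=
      EuclideanSpace.volume_preserving_symm_measurableEquiv_toLp (Fin 3)
    have m4 : MeasurePreserving e4 volume volume := by
      have := measurePreserving_piFinSuccAbove (fun _ : Fin 3 => (volume : Measure ℝ)) 0
      exact this
    exact m4.comp (m3.comp (m2.comp m1))
  -- the target set
  set T : Set (ℝ × (Fin 2 → ℝ)) :=
    Set.Icc (-A) A ×ˢ {t | t 0 ^ 2 + t 1 ^ 2 ≤ c} with hT
  have hmem : ∀ x : ι → ℝ, Ψ x ∈ T ↔ (|∑ w, x w| ≤ Real.sqrt 3 * A ∧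
      ∑ w, (x w) ^ 2 ≤ (∑ w, x w) ^ 2 / 3 + c) := by
    intro x
    set ξ : EuclideanSpace ℝ ι := e1 x with hξ
    have hξx : ∀ w, ξ w = x w := fun w => rfl
    set y : EuclideanSpace ℝ (Fin 3) := b.repr ξ with hy
    have hΨx : Ψ x = (y 0, fun i : Fin 2 => y ((0 : Fin 3).succAbove i)) := rfl
    have hy0 : y 0 = (∑ w, x w) / Real.sqrt 3 := by
      rw [hy, b.repr_apply_apply, hb0, PiLp.inner_apply]
      simp only [RCLike.inner_apply, starRingEnd_apply, star_trivial, hξx]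
      show ∑ w, x w * (Real.sqrt 3)⁻¹ = _
      rw [← Finset.sum_mul, div_eq_mul_inv]
    have hsumsq : ∑ i : Fin 3, (y i) ^ 2 = ∑ w, (x w) ^ 2 := by
      have h1 : ‖y‖ = ‖ξ‖ := b.repr.norm_map ξ
      rw [EuclideanSpace.norm_eq, EuclideanSpace.norm_eq] at h1
      have h3 : (∑ i : Fin 3, ‖y i‖ ^ 2) = ∑ w, ‖ξ w‖ ^ 2 := by
        have ha : (0:ℝ) ≤ ∑ i : Fin 3, ‖y i‖ ^ 2 := Finset.sum_nonneg fun _ _ => sq_nonneg _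
        have hb' : (0:ℝ) ≤ ∑ w, ‖ξ w‖ ^ 2 := Finset.sum_nonneg fun _ _ => sq_nonneg _
        calc (∑ i : Fin 3, ‖y i‖ ^ 2)
            = Real.sqrt (∑ i : Fin 3, ‖y i‖ ^ 2) ^ 2 := (Real.sq_sqrt ha).symm
          _ = Real.sqrt (∑ w, ‖ξ w‖ ^ 2) ^ 2 := by rw [h1]
          _ = _ := Real.sq_sqrt hb'
      simpa [Real.norm_eq_abs, sq_abs, hξx] using h3
    have hy12 : y 1 ^ 2 + y 2 ^ 2 = ∑ w, (x w) ^ 2 - (∑ w, x w) ^ 2 / 3 := by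
      have := hsumsq
      rw [Fin.sum_univ_three] at this
      have hy0sq : y 0 ^ 2 = (∑ w, x w) ^ 2 / 3 := by
        rw [hy0, div_pow, hsq3]
      linarith
    rw [hΨx, hT, Set.mem_prod]
    constructor
    · rintro ⟨h1, h2⟩
      rw [Set.mem_Icc] at h1
      simp only [Set.mem_setOf_eq] at h2
      have hs1 : ((0 : Fin 3).succAbove 0) = 1 := rfl
      have hs2 : ((0 : Fin 3).succAbove 1) = 2 := rfl
      rw [hs1, hs2] at h2
      constructor
      · have : |y 0| ≤ A := abs_le.mpr h1
        rw [hy0, abs_div, abs_of_pos h3, div_le_iff₀ h3] at this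
        linarith [this]
      · linarith [hy12, h2]
    · rintro ⟨h1, h2⟩
      refine ⟨Set.mem_Icc.mpr (abs_le.mp ?_), ?_⟩
      · rw [hy0, abs_div, abs_of_pos h3, div_le_iff₀ h3]
        linarith
      · simp only [Set.mem_setOf_eq]
        have hs1 : ((0 : Fin 3).succAbove 0) = 1 := rfl
        have hs2 : ((0 : Fin 3).succAbove 1) = 2 := rfl
        rw [hs1, hs2]
        linarith [hy12]
  have hset : {x : ι → ℝ | |∑ w, x w| ≤ Real.sqrt 3 * A ∧
      ∑ w, (x w) ^ 2 ≤ (∑ w, x w) ^ 2 / 3 + c} = Ψ ⁻¹' T := by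
    ext x
    exact (hmem x).symm
  rw [hset, hΨ.measure_preimage_emb Ψ.measurableEmbedding]
  -- volume of T
  have hD : {t : Fin 2 → ℝ | t 0 ^ 2 + t 1 ^ 2 ≤ c} =
      (MeasurableEquiv.toLp 2 (Fin 2 → ℝ)).symm.symm ⁻¹' Metric.closedBall 0 (Real.sqrt c) := by
    ext t
    rw [Set.mem_preimage, Metric.mem_closedBall, dist_zero_right, EuclideanSpace.norm_eq]
    have ht : ∀ i, ‖((MeasurableEquiv.toLp 2 (Fin 2 → ℝ)).symm.symm t) i‖ ^ 2 = (t i) ^ 2 := by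
      intro i
      rw [Real.norm_eq_abs, sq_abs]
      rfl
    rw [Finset.sum_congr rfl (fun i _ => ht i), Fin.sum_univ_two, Set.mem_setOf_eq]
    rw [show Real.sqrt c = Real.sqrt c from rfl]
    constructor
    · intro h
      exact (Real.sqrt_le_sqrt_iff hc).mpr h
    · intro h
      exact (Real.sqrt_le_sqrt_iff hc).mp h
  have hDvol : volume {t : Fin 2 → ℝ | t 0 ^ 2 + t 1 ^ 2 ≤ c} = ENNReal.ofReal (c * Real.pi) := by
    have hmp : MeasurePreserving ((MeasurableEquiv.toLp 2 (Fin 2 → ℝ)).symm.symm)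
        volume volume := (EuclideanSpace.volume_preserving_symm_measurableEquiv_toLp (Fin 2)).symm
    rw [hD, hmp.measure_preimage_emb
      (MeasurableEquiv.toLp 2 (Fin 2 → ℝ)).symm.symm.measurableEmbedding,
      EuclideanSpace.volume_closedBall, Fintype.card_fin,
      show (((2:ℕ):ℝ) / 2 + 1) = 2 by norm_num, Real.Gamma_two, div_one,
      Real.sq_sqrt Real.pi_pos.le, ← ENNReal.ofReal_pow (Real.sqrt_nonneg c),
      Real.sq_sqrt hc, ← ENNReal.ofReal_mul hc]
  rw [hT, Measure.volume_eq_prod, Measure.prod_prod, Real.volume_Icc, hDvol]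
  rw [show A - (-A) = 2 * A by ring]

set_option maxHeartbeats 2000000 in
/-- In a totally real cubic field with |Δ| ≥ 2 there is a generator μ ∈ ℤ + 2O₊
with tr(μ²) ≤ 1 + (16/π)|Δ|^{1/2}, and hence tr(μ²)³ < 196|Δ|^{3/2}. -/
theorem exists_generator_with_trace_bound
    (K : Type) [Field K] [NumberField K]
    (hdeg : Module.finrank ℚ K = 3)
    (hreal : ∀ φ : K →+* ℂ, ∀ x : K, (φ x).im = 0)
    (hdisc : 2 ≤ |(NumberField.discr K : ℤ)|) :
    ∃ μ : K,
      (∃ (z : ℤ) (x : K), IsIntegral ℤ x ∧ μ = (z : K) + 2 * x) ∧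
      Algebra.adjoin ℚ {μ} = ⊤ ∧
      (Algebra.trace ℚ K (μ ^ 2) : ℝ)
        ≤ 1 + (16 / Real.pi) * Real.sqrt |(NumberField.discr K : ℝ)| ∧
      (Algebra.trace ℚ K (μ ^ 2) : ℝ) ^ 3
        ≤ (1 + (16 / Real.pi) * Real.sqrt |(NumberField.discr K : ℝ)|) ^ 3 ∧
      (1 + (16 / Real.pi) * Real.sqrt |(NumberField.discr K : ℝ)|) ^ 3
        < 196 * |(NumberField.discr K : ℝ)| ^ ((3 : ℝ) / 2) := by
  classical
  have hπ : (0:ℝ) < Real.pi := Real.pi_pos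
  have h3 : (0:ℝ) < Real.sqrt 3 := Real.sqrt_pos.mpr (by norm_num)
  have hsq3 : Real.sqrt 3 ^ 2 = 3 := Real.sq_sqrt (by norm_num)
  set d : ℝ := |(NumberField.discr K : ℝ)| with hd_def
  have hd2 : (2:ℝ) ≤ d := by
    rw [hd_def, ← Int.cast_abs]
    exact_mod_cast hdisc
  have hd0 : (0:ℝ) < d := by linarith
  have hsd : (0:ℝ) < Real.sqrt d := Real.sqrt_pos.mpr hd0
  -- every place is real
  have hreal' : ∀ φ : K →+* ℂ, ComplexEmbedding.IsReal φ := by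
    intro φ
    rw [ComplexEmbedding.isReal_iff]
    ext x
    rw [ComplexEmbedding.conjugate_coe_eq]
    exact Complex.conj_eq_iff_im.mpr (hreal φ x)
  have hplaces : ∀ w : InfinitePlace K, IsReal w := fun w => isReal_iff.mpr (hreal' _)
  have hcempty : IsEmpty {w : InfinitePlace K // IsComplex w} :=
    ⟨fun w => (not_isReal_iff_isComplex.mpr w.2) (hplaces w.1)⟩
  have hnrc : nrComplexPlaces K = 0 := @Fintype.card_eq_zero _ _ hcempty
  have hcard : Fintype.card {w : InfinitePlace K // IsReal w} = 3 := by
    have h := card_add_two_mul_card_eq_rank K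
    rw [hnrc, hdeg] at h
    simpa [nrRealPlaces] using h
  -- the trace of any element, as a sum over real places
  have trace_eq : ∀ μ : K, ((Algebra.trace ℚ K μ : ℚ) : ℝ) =
      ∑ w : {w : InfinitePlace K // IsReal w}, (mixedEmbedding K μ).1 w := by
    intro μ
    have h1 : (algebraMap ℚ ℂ) (Algebra.trace ℚ K μ) = ∑ σ : K →ₐ[ℚ] ℂ, σ μ :=
      trace_eq_sum_embeddings ℂ
    let emb : {w : InfinitePlace K // IsReal w} ≃ (K →+* ℂ) :=
      { toFun := fun w => w.1.embedding
        invFun := fun φ => ⟨mk φ, hplaces _⟩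
        left_inv := fun w => Subtype.ext (mk_embedding w.1)
        right_inv := fun φ => embedding_mk_eq_of_isReal (hreal' φ) }
    have h2 : ∑ σ : K →ₐ[ℚ] ℂ, σ μ =
        ∑ w : {w : InfinitePlace K // IsReal w}, w.1.embedding μ := by
      rw [← Fintype.sum_equiv (emb.trans (RingHom.equivRatAlgHom K ℂ))
        (fun w => w.1.embedding μ) (fun σ => σ μ) (fun w => rfl)]
    have h3 : ∀ w : {w : InfinitePlace K // IsReal w},
        w.1.embedding μ = (((mixedEmbedding K μ).1 w : ℝ) : ℂ) := by
      intro w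
      rw [mixedEmbedding_apply_isReal, embedding_of_isReal_apply]
    rw [h2] at h1
    rw [Finset.sum_congr rfl (fun w _ => h3 w)] at h1
    have h4 : (algebraMap ℚ ℂ) (Algebra.trace ℚ K μ) =
        (((Algebra.trace ℚ K μ : ℚ) : ℝ) : ℂ) := by
      rw [eq_ratCast, Complex.ofReal_ratCast]
    rw [h4, ← Complex.ofReal_sum] at h1
    exact_mod_cast h1
  -- the convex body
  set c : ℝ := 3 * Real.sqrt d / Real.pi with hc_def
  have hc0 : (0:ℝ) < c := by positivity
  set S : Set (mixedSpace K) :=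
    {v | |∑ w, v.1 w| ≤ 5 / 2 ∧ ∑ w, (v.1 w) ^ 2 ≤ (∑ w, v.1 w) ^ 2 / 3 + c} with hS_def
  -- symmetry
  have hsymm : ∀ v ∈ S, -v ∈ S := by
    rintro v ⟨h1, h2⟩
    have e1 : ∑ w, (-v).1 w = -∑ w, v.1 w := by
      simp [Prod.fst_neg]
    have e2 : ∀ w : {w : InfinitePlace K // IsReal w}, ((-v).1 w) ^ 2 = (v.1 w) ^ 2 := by
      intro w; simp [Prod.fst_neg]
    refine ⟨?_, ?_⟩
    · rw [e1, abs_neg]; exact h1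
    · rw [Finset.sum_congr rfl (fun w _ => e2 w), e1, neg_sq]; exact h2
  -- convexity
  have hconv : Convex ℝ S := by
    let L : mixedSpace K →ₗ[ℝ] ℝ :=
      { toFun := fun v => ∑ w, v.1 w
        map_add' := by intro v w; simp [Finset.sum_add_distrib]
        map_smul' := by intro r v; simp [Finset.mul_sum] }
    let P : mixedSpace K →ₗ[ℝ] EuclideanSpace ℝ {w : InfinitePlace K // IsReal w} :=
      { toFun := fun v => WithLp.toLp 2 (fun w => v.1 w - (∑ w', v.1 w') / 3)
        map_add' := by
          intro v w
          ext i
          show (v + w).1 i - (∑ w', (v + w).1 w') / 3 =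
            (v.1 i - (∑ w', v.1 w') / 3) + (w.1 i - (∑ w', w.1 w') / 3)
          have h1 : ∀ w', (v + w).1 w' = v.1 w' + w.1 w' := fun _ => rfl
          rw [h1, Finset.sum_congr rfl (fun w' _ => h1 w'), Finset.sum_add_distrib]
          ring
        map_smul' := by
          intro r v
          ext i
          show (r • v).1 i - (∑ w', (r • v).1 w') / 3 = r * (v.1 i - (∑ w', v.1 w') / 3)
          have h1 : ∀ w', (r • v).1 w' = r * v.1 w' := fun _ => rfl
          rw [h1, Finset.sum_congr rfl (fun w' _ => h1 w'), ← Finset.mul_sum]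
          ring }
    have hSeq : S = L ⁻¹' (Set.Icc (-(5/2)) (5/2)) ∩ P ⁻¹' (Metric.closedBall 0 (Real.sqrt c)) := by
      ext v
      simp only [hS_def, Set.mem_setOf_eq, Set.mem_inter_iff, Set.mem_preimage, Set.mem_Icc,
        Metric.mem_closedBall, dist_zero_right]
      have hL : L v = ∑ w, v.1 w := rfl
      have hterm : ∀ w : {w : InfinitePlace K // IsReal w},
          ‖(P v) w‖ ^ 2 = (v.1 w - (∑ w', v.1 w') / 3) ^ 2 := by
        intro w; rw [Real.norm_eq_abs, sq_abs]; rfl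
      have hsum : ∑ w, ‖(P v) w‖ ^ 2 = ∑ w, (v.1 w) ^ 2 - (∑ w, v.1 w) ^ 2 / 3 := by
        rw [Finset.sum_congr rfl (fun w _ => hterm w)]
        have expand : ∀ w ∈ (Finset.univ : Finset {w : InfinitePlace K // IsReal w}),
            (v.1 w - (∑ w', v.1 w') / 3) ^ 2 =
            (v.1 w) ^ 2 - (2 * (∑ w', v.1 w') / 3) * v.1 w + (∑ w', v.1 w') ^ 2 / 9 := by
          intro w _; ring
        rw [Finset.sum_congr rfl expand, Finset.sum_add_distrib, Finset.sum_sub_distrib,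
          ← Finset.mul_sum, Finset.sum_const, Finset.card_univ, hcard, nsmul_eq_mul]
        ring
      constructor
      · rintro ⟨h1, h2⟩
        refine ⟨?_, ?_⟩
        · rw [hL]; exact abs_le.mp h1
        · rw [EuclideanSpace.norm_eq]
          have hle : ∑ w, ‖(P v) w‖ ^ 2 ≤ c := by rw [hsum]; linarith
          exact Real.sqrt_le_sqrt hle
      · rintro ⟨h1, h2⟩
        rw [hL] at h1
        refine ⟨abs_le.mpr h1, ?_⟩
        rw [EuclideanSpace.norm_eq] at h2
        have h2' : ∑ w, ‖(P v) w‖ ^ 2 ≤ c :=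
          (Real.sqrt_le_sqrt_iff hc0.le).mp h2
        rw [hsum] at h2'
        linarith
    rw [hSeq]
    exact ((convex_Icc _ _).linear_preimage L).inter
      ((convex_closedBall (0 : EuclideanSpace ℝ _) (Real.sqrt c)).linear_preimage P)
  -- volume of S
  have hSvol : volume S =
      ENNReal.ofReal (2 * (5 / (2 * Real.sqrt 3))) * ENNReal.ofReal (c * Real.pi) := by
    have h52 : Real.sqrt 3 * (5 / (2 * Real.sqrt 3)) = 5 / 2 := by
      field_simp
    have hsplit : S = {x : {w : InfinitePlace K // IsReal w} → ℝ |
        |∑ w, x w| ≤ Real.sqrt 3 * (5 / (2 * Real.sqrt 3)) ∧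
        ∑ w, (x w) ^ 2 ≤ (∑ w, x w) ^ 2 / 3 + c} ×ˢ
        (Set.univ : Set ({w : InfinitePlace K // IsComplex w} → ℂ)) := by
      ext v
      simp only [hS_def, Set.mem_setOf_eq, Set.mem_prod, Set.mem_univ, and_true, h52]
    rw [hsplit, Measure.volume_eq_prod, Measure.prod_prod,
      aux_volume hcard _ c (by positivity) hc0.le]
    have huniv : volume (Set.univ : Set ({w : InfinitePlace K // IsComplex w} → ℂ)) = 1 := by
      haveI := hcempty
      rw [volume_pi, Measure.pi_univ]
      simp
    rw [huniv, mul_one]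
  -- the Minkowski bound comparison
  have hmb : volume (ZSpan.fundamentalDomain (fractionalIdealLatticeBasis K 1)) *
      2 ^ finrank ℝ (mixedSpace K) < volume S := by
    rw [volume_fundamentalDomain_fractionalIdealLatticeBasis,
      volume_fundamentalDomain_latticeBasis, hnrc, mixedEmbedding.finrank, hdeg, hSvol]
    have habs : ((‖(NumberField.discr K : ℤ)‖₊ : ℝ≥0) : ℝ) = d := by
      rw [coe_nnnorm, Int.norm_eq_abs, hd_def]
    have hsqrt : ((NNReal.sqrt ‖(NumberField.discr K : ℤ)‖₊ : ℝ≥0) : ℝ≥0∞) =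
        ENNReal.ofReal (Real.sqrt d) := by
      rw [← ENNReal.ofReal_coe_nnreal, Real.coe_sqrt, habs]
    simp only [Units.val_one, FractionalIdeal.absNorm_one, Rat.cast_one, ENNReal.ofReal_one,
      pow_zero, one_mul]
    rw [hsqrt, show ((2:ℝ≥0∞) ^ 3) = ENNReal.ofReal 8 by norm_num,
      ← ENNReal.ofReal_mul (Real.sqrt_nonneg d),
      ← ENNReal.ofReal_mul (by positivity)]
    rw [ENNReal.ofReal_lt_ofReal_iff (by positivity)]
    have hc_eq : 2 * (5 / (2 * Real.sqrt 3)) * (c * Real.pi) = 5 * Real.sqrt 3 * Real.sqrt d := by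
      rw [hc_def]
      field_simp
      nlinarith [hsq3, h3]
    rw [hc_eq]
    nlinarith [hsq3, h3, hsd]
  -- apply Minkowski's theorem
  have h_fund := ZSpan.isAddFundamentalDomain' (fractionalIdealLatticeBasis K 1) volume
  haveI : Countable
      (Submodule.span ℤ (Set.range (fractionalIdealLatticeBasis K 1))).toAddSubgroup := by
    change Countable (Submodule.span ℤ (Set.range (fractionalIdealLatticeBasis K 1)))
    infer_instance
  obtain ⟨⟨p, hp⟩, h_nz, h_mem⟩ := exists_ne_zero_mem_lattice_of_measure_mul_two_pow_lt_measure
    h_fund hsymm hconv hmb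
  rw [Submodule.mem_toAddSubgroup, mem_span_fractionalIdealLatticeBasis] at hp
  obtain ⟨a, ha, rfl⟩ := hp
  have ha0 : a ≠ 0 := by simpa using h_nz
  -- a is an algebraic integer
  rw [Units.val_one] at ha
  obtain ⟨xint, hxint⟩ := (FractionalIdeal.mem_one_iff _).mp ha
  have hint : IsIntegral ℤ a := by
    rw [← hxint]
    exact xint.isIntegral_coe
  -- the trace of a is a rational integer
  obtain ⟨t, ht⟩ : ∃ t : ℤ, ((t : ℚ)) = Algebra.trace ℚ K a :=
    IsIntegrallyClosed.isIntegral_iff.mp (Algebra.isIntegral_trace (R := ℤ) hint)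
  have hcond1 : |∑ w, (mixedEmbedding K a).1 w| ≤ 5 / 2 := h_mem.1
  have hcond2 : ∑ w, ((mixedEmbedding K a).1 w) ^ 2 ≤
      (∑ w, (mixedEmbedding K a).1 w) ^ 2 / 3 + c := h_mem.2
  have hsa : ∑ w, (mixedEmbedding K a).1 w = (t : ℝ) := by
    rw [← trace_eq a, ← ht]
    norm_cast
  -- a is irrational
  have hairr : ∀ r : ℚ, algebraMap ℚ K r ≠ a := by
    intro r hr
    have hrint : IsIntegral ℤ r := by
      rw [← isIntegral_algebraMap_iff (algebraMap ℚ K).injective, hr]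
      exact hint
    obtain ⟨m, hm⟩ := IsIntegrallyClosed.isIntegral_iff.mp hrint
    have htr3 : Algebra.trace ℚ K a = 3 * r := by
      rw [← hr, Algebra.trace_algebraMap, hdeg, nsmul_eq_mul]
      norm_num
    have hmt : t = 3 * m := by
      have h5 : (t : ℚ) = 3 * m := by
        rw [ht, htr3, ← hm, eq_intCast]
      exact_mod_cast h5
    have habs : |(t:ℝ)| ≤ 5/2 := by rw [← hsa]; exact hcond1
    have hm0 : m = 0 := by
      have h1 := abs_le.mp habs
      rw [hmt] at h1
      push_cast at h1
      have h6 : (-1:ℝ) < (m:ℝ) ∧ ((m:ℝ) : ℝ) < 1 := by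
        constructor <;> nlinarith [h1.1, h1.2]
      have h7 : (-1:ℤ) < m := by exact_mod_cast h6.1
      have h8 : m < 1 := by exact_mod_cast h6.2
      omega
    rw [hm0] at hm
    apply ha0
    rw [← hr, ← hm]
    simp
  -- choice of the integer z
  set z : ℤ := -round ((2 * (t:ℚ)) / 3) with hz_def
  have hz : |3 * z + 2 * t| ≤ 1 := by
    have h1 : |(2*(t:ℚ))/3 - (round ((2*(t:ℚ))/3) : ℤ)| ≤ 1/2 := abs_sub_round _
    have h2 : |(3*(z:ℚ) + 2*(t:ℚ))| ≤ 3/2 := by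
      rw [hz_def]
      push_cast
      rw [show (3*(-(round ((2*(t:ℚ))/3) : ℚ)) + 2*(t:ℚ)) =
        3 * ((2*(t:ℚ))/3 - (round ((2*(t:ℚ))/3) : ℤ)) by push_cast; ring, abs_mul]
      rw [show |(3:ℚ)| = 3 by norm_num]
      linarith
    have h3 : |3*z + 2*t| < 2 := by
      have h4 : ((|3*z+2*t| : ℤ) : ℚ) < 2 := by
        rw [Int.cast_abs]
        push_cast
        calc |3*(z:ℚ) + 2*(t:ℚ)| ≤ 3/2 := h2
          _ < 2 := by norm_num
      exact_mod_cast h4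
    omega
  -- the coordinates of μ := z + 2a
  have hμcoord : ∀ w : {w : InfinitePlace K // IsReal w},
      (mixedEmbedding K ((z:K) + 2*a)).1 w = (z:ℝ) + 2 * (mixedEmbedding K a).1 w := by
    intro w
    have e1 : (mixedEmbedding K ((z:K) + 2*a)) =
        mixedEmbedding K ((z:K)) + mixedEmbedding K (2:K) * mixedEmbedding K a := by
      rw [← map_mul, ← map_add]
    rw [e1]
    have e2 : (mixedEmbedding K ((z:K))).1 w = (z:ℝ) := by
      rw [map_intCast]
      rfl
    have e3 : (mixedEmbedding K (2:K)).1 w = 2 := by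
      rw [map_ofNat]
      rfl
    show (mixedEmbedding K ((z:K))).1 w + (mixedEmbedding K (2:K)).1 w *
      (mixedEmbedding K a).1 w = _
    rw [e2, e3]
  have hμsq : ∀ w : {w : InfinitePlace K // IsReal w},
      (mixedEmbedding K (((z:K) + 2*a)^2)).1 w = ((z:ℝ) + 2 * (mixedEmbedding K a).1 w)^2 := by
    intro w
    rw [map_pow]
    show ((mixedEmbedding K ((z:K) + 2*a)).1 w)^2 = _
    rw [hμcoord w]
  -- trace of μ²
  have htrμ : ((Algebra.trace ℚ K (((z:K) + 2*a)^2) : ℚ) : ℝ) =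
      ∑ w, ((z:ℝ) + 2 * (mixedEmbedding K a).1 w)^2 := by
    rw [trace_eq]
    exact Finset.sum_congr rfl fun w _ => hμsq w
  have htr_nonneg : (0:ℝ) ≤ ((Algebra.trace ℚ K (((z:K) + 2*a)^2) : ℚ) : ℝ) := by
    rw [htrμ]
    exact Finset.sum_nonneg fun _ _ => sq_nonneg _
  -- the key bound
  have hbound : ((Algebra.trace ℚ K (((z:K) + 2*a)^2) : ℚ) : ℝ) ≤ 1/3 + 4*c := by
    rw [htrμ]
    have hexp : ∑ w, ((z:ℝ) + 2 * (mixedEmbedding K a).1 w)^2 =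
        3 * (z:ℝ)^2 + 4 * (z:ℝ) * (t:ℝ) + 4 * ∑ w, ((mixedEmbedding K a).1 w)^2 := by
      have expand : ∀ w ∈ (Finset.univ : Finset {w : InfinitePlace K // IsReal w}),
          ((z:ℝ) + 2 * (mixedEmbedding K a).1 w)^2 =
          (z:ℝ)^2 + (4*(z:ℝ)) * (mixedEmbedding K a).1 w +
            4 * ((mixedEmbedding K a).1 w)^2 := by
        intro w _; ring
      rw [Finset.sum_congr rfl expand, Finset.sum_add_distrib, Finset.sum_add_distrib,
        ← Finset.mul_sum, ← Finset.mul_sum, Finset.sum_const, Finset.card_univ, hcard,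
        nsmul_eq_mul, hsa]
      ring
    have hq : ∑ w, ((mixedEmbedding K a).1 w)^2 ≤ (t:ℝ)^2/3 + c := by
      have h9 := hcond2
      rw [hsa] at h9
      linarith
    have hzsq : ((3*z + 2*t : ℤ) : ℝ)^2 ≤ 1 := by
      have h10 : ((|3*z+2*t| : ℤ) : ℝ) ≤ 1 := by exact_mod_cast hz
      rw [Int.cast_abs] at h10
      nlinarith [sq_abs ((3*z+2*t : ℤ):ℝ), abs_nonneg ((3*z+2*t : ℤ):ℝ)]
    have hid : 3*(z:ℝ)^2 + 4*(z:ℝ)*(t:ℝ) + 4*((t:ℝ)^2/3) = ((3*z+2*t : ℤ):ℝ)^2/3 := by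
      push_cast
      ring
    rw [hexp]
    linarith
  -- μ is not rational
  have hμirr : ((z : K) + 2*a) ∉ (⊥ : IntermediateField ℚ K) := by
    rw [IntermediateField.mem_bot]
    rintro ⟨r, hr⟩
    apply hairr ((r - z)/2)
    have h13 : algebraMap ℚ K ((r - z)/2) = (algebraMap ℚ K r - (z:K))/2 := by
      rw [map_div₀, map_sub, map_intCast]
      norm_num
    rw [h13, hr]
    ring
  -- adjoin μ is everything
  have hFtop : ℚ⟮(z : K) + 2*a⟯ = ⊤ := by
    have hμF : (z:K) + 2*a ∈ ℚ⟮(z : K) + 2*a⟯ := IntermediateField.mem_adjoin_simple_self ℚ _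
    haveI : Module.Free (ℚ⟮(z : K) + 2*a⟯) K := Module.Free.of_divisionRing (ℚ⟮(z : K) + 2*a⟯) K
    haveI : Module.Free ℚ (ℚ⟮(z : K) + 2*a⟯) := Module.Free.of_divisionRing ℚ (ℚ⟮(z : K) + 2*a⟯)
    have hdvd : finrank ℚ (ℚ⟮(z : K) + 2*a⟯) ∣ 3 :=
      ⟨finrank (ℚ⟮(z : K) + 2*a⟯) K, by rw [← hdeg, ← Module.finrank_mul_finrank ℚ (ℚ⟮(z : K) + 2*a⟯) K]⟩
    have hne1 : finrank ℚ (ℚ⟮(z : K) + 2*a⟯) ≠ 1 := by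
      intro h
      exact hμirr (IntermediateField.finrank_eq_one_iff.mp h ▸ hμF)
    have h3' : finrank ℚ (ℚ⟮(z : K) + 2*a⟯) = 3 :=
      (Nat.prime_three.eq_one_or_self_of_dvd _ hdvd).resolve_left hne1
    have hsub : Subalgebra.toSubmodule (ℚ⟮(z : K) + 2*a⟯).toSubalgebra = ⊤ :=
      Submodule.eq_top_of_finrank_eq (by rw [hdeg]; exact h3')
    have hsub2 : (ℚ⟮(z : K) + 2*a⟯).toSubalgebra = ⊤ := by
      rwa [Algebra.toSubmodule_eq_top] at hsub
    apply IntermediateField.toSubalgebra_injective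
    rw [hsub2, IntermediateField.top_toSubalgebra]
  have hadj : Algebra.adjoin ℚ {(z:K) + 2*a} = ⊤ := by
    rw [← IntermediateField.adjoin_simple_toSubalgebra_of_isAlgebraic (IsIntegral.of_finite ℚ _).isAlgebraic,
      hFtop, IntermediateField.top_toSubalgebra]
  -- final numeric facts
  have hgap : ((Algebra.trace ℚ K (((z:K) + 2*a)^2) : ℚ) : ℝ) ≤
      1 + (16 / Real.pi) * Real.sqrt d := by
    have h11 : (16 / Real.pi) * Real.sqrt d - 4*c = 4*Real.sqrt d/Real.pi := by
      rw [hc_def]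
      field_simp
      ring
    have h12 : (0:ℝ) ≤ 4*Real.sqrt d/Real.pi := by positivity
    linarith
  exact ⟨(z : K) + 2*a, ⟨z, a, hint, rfl⟩, hadj, hgap,
    pow_le_pow_left₀ htr_nonneg hgap 3, aux_numeric hd2⟩
end
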